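/- arXiv:2505.10186 — 2 statements merged into one kernel-verified Lean document; each statement's English description precedes it below -/
import Mathlib

section
/- Let Σ be a finite type and let A : Set (List Σ) be a set of finite words over Σ. Then there exist a finite type C, a function f : Σ^ω → 𝒫(C^ω) that is prefix-continuous, prefix-closed, and prefix-compact, and a recurrence property L ⊆ C^ω, such that the ω-power A^ω equals the existential preimage f_E^{-1}(L). -/
/-- The prefix of length `n` of the infinite word `π`, i.e. the list `[π 0, …, π (n-1)]`. -/
def wordPrefix {A : Type*} (π : ℕ → A) (n : ℕ) : List A := (List.range n).map π

/-- The set of prefixes of length `n` of words in `L`. -/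
def prefN {A : Type*} (L : Set (ℕ → A)) (n : ℕ) : Set (List A) :=
  (fun π => wordPrefix π n) '' L

/-- The set of all prefixes of words in `L`. -/
def prefAll {A : Type*} (L : Set (ℕ → A)) : Set (List A) := ⋃ n, prefN L n

/-- The set of all prefixes of the single word `π`. -/
def prefWord {A : Type*} (π : ℕ → A) : Set (List A) := {w | ∃ n, w = wordPrefix π n}

/-- `f` is prefix-continuous. -/
def PrefixContinuous {A B : Type*} (f : (ℕ → A) → Set (ℕ → B)) : Prop :=
  ∀ (n : ℕ) (π : ℕ → A), ∃ m : ℕ, ∀ π' : ℕ → A,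
    wordPrefix π' m = wordPrefix π m → prefN (f π) n = prefN (f π') n

/-- `f` is prefix-closed. -/
def PrefixClosed {A B : Type*} (f : (ℕ → A) → Set (ℕ → B)) : Prop :=
  ∀ (π : ℕ → A) (σ : ℕ → B), prefWord σ ⊆ prefAll (f π) → σ ∈ f π

/-- `f` is prefix-compact. -/
def PrefixCompact {A B : Type*} (f : (ℕ → A) → Set (ℕ → B)) : Prop :=
  ∀ (n : ℕ) (π : ℕ → A), (prefN (f π) n).Finite

/-- The universal preimage of `S` under `f`. -/
def univPreimage {A B : Type*} (f : (ℕ → A) → Set (ℕ → B)) (S : Set (ℕ → B)) :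
    Set (ℕ → A) := {π | f π ⊆ S}

/-- The existential preimage of `S` under `f`. -/
def existPreimage {A B : Type*} (f : (ℕ → A) → Set (ℕ → B)) (S : Set (ℕ → B)) :
    Set (ℕ → A) := {π | (f π ∩ S).Nonempty}

/-- `L` is a safety property. -/
def IsSafetyProperty {B : Type*} (L : Set (ℕ → B)) : Prop :=
  ∃ Φ : Set (List B), L = {π | ∀ n : ℕ, wordPrefix π n ∈ Φ}

/-- `L` is a guarantee property. -/
def IsGuaranteeProperty {B : Type*} (L : Set (ℕ → B)) : Prop :=
  ∃ Φ : Set (List B), L = {π | ∃ n : ℕ, wordPrefix π n ∈ Φ}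

/-- `L` is a recurrence property. -/
def IsRecurrenceProperty {B : Type*} (L : Set (ℕ → B)) : Prop :=
  ∃ Φ : Set (List B), L = {π | {n : ℕ | wordPrefix π n ∈ Φ}.Infinite}

/-- `L` is a persistence property. -/
def IsPersistenceProperty {B : Type*} (L : Set (ℕ → B)) : Prop :=
  ∃ Φ : Set (List B), L = {π | {n : ℕ | wordPrefix π n ∈ Φ}.Finite}

/-- The ω-power of a set `A` of finite words: the set of infinite words that can be split
into consecutive finite blocks `[π (m k), …, π (m (k+1) - 1)]`, each belonging to `A`. -/
def omegaPower {Sig : Type*} (A : Set (List Sig)) : Set (ℕ → Sig) :=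
  {π | ∃ m : ℕ → ℕ, m 0 = 0 ∧ StrictMono m ∧
    ∀ k : ℕ, ((List.range (m (k + 1) - m k)).map fun j => π (m k + j)) ∈ A}


section OmegaPowerAux

variable {g : Type} {Sg : Type*}

/-- `j` is a cut point of the annotated word `σ`. -/
def OPcut (σ : ℕ → g × Bool) (j : ℕ) : Prop := j = 0 ∨ (σ (j - 1)).2 = true

/-- The block of `σ` between positions `i` and `j`, projected via `d`. -/
def OPblock (d : g → Sg) (σ : ℕ → g × Bool) (i j : ℕ) : List Sg :=
  (List.range (j - i)).map fun t => d (σ (i + t)).1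

/-- The first `n` letters of `σ` form a valid partially-decomposed word. -/
def OPvalid (d : g → Sg) (A : Set (List Sg)) (σ : ℕ → g × Bool) (n : ℕ) : Prop :=
  0 < n ∧ OPcut σ n ∧ ∀ i j, i < j → j ≤ n → OPcut σ i → OPcut σ j →
    (∀ l, i < l → l < j → ¬ OPcut σ l) → OPblock d σ i j ∈ A

/-- The recurrence witness set. -/
def OPphi (d : g → Sg) (A : Set (List Sg)) : Set (List (g × Bool)) :=
  {w | ∃ σ : ℕ → g × Bool, w = wordPrefix σ w.length ∧ OPvalid d A σ w.length}

lemma wordPrefix_length {α : Type*} (π : ℕ → α) (n : ℕ) : (wordPrefix π n).length = n := by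
  simp [wordPrefix]

lemma wordPrefix_eq_iff {α : Type*} {σ σ' : ℕ → α} {n : ℕ} :
    wordPrefix σ n = wordPrefix σ' n ↔ ∀ j < n, σ j = σ' j := by
  simp [wordPrefix, List.map_inj_left]

lemma OPcut_congr {σ σ' : ℕ → g × Bool} {n : ℕ} (h : ∀ j < n, σ j = σ' j)
    {j : ℕ} (hj : j ≤ n) : OPcut σ j ↔ OPcut σ' j := by
  rcases Nat.eq_zero_or_pos j with rfl | hj0
  · exact ⟨fun _ => Or.inl rfl, fun _ => Or.inl rfl⟩
  · unfold OPcut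
    rw [h (j - 1) (by omega)]

lemma OPvalid_of {d : g → Sg} {A : Set (List Sg)} {σ σ' : ℕ → g × Bool} {n : ℕ}
    (h : ∀ j < n, σ j = σ' j) (hv : OPvalid d A σ n) : OPvalid d A σ' n := by
  obtain ⟨h0, hc, hb⟩ := hv
  refine ⟨h0, (OPcut_congr h le_rfl).mp hc, fun i j hij hjn hci hcj hno => ?_⟩
  have hblk : OPblock d σ' i j = OPblock d σ i j := by
    unfold OPblock
    refine List.map_congr_left fun t ht => ?_
    rw [List.mem_range] at ht
    rw [h (i + t) (by omega)]
  rw [hblk]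
  exact hb i j hij hjn ((OPcut_congr h (le_of_lt (lt_of_lt_of_le hij hjn))).mpr hci)
    ((OPcut_congr h hjn).mpr hcj)
    (fun l h1 h2 hl => hno l h1 h2 ((OPcut_congr h (by omega)).mp hl))

lemma mem_OPphi {d : g → Sg} {A : Set (List Sg)} {σ : ℕ → g × Bool} {n : ℕ} :
    wordPrefix σ n ∈ OPphi d A ↔ OPvalid d A σ n := by
  unfold OPphi
  simp only [Set.mem_setOf_eq, wordPrefix_length]
  constructor
  · rintro ⟨σ', he, hv⟩
    exact OPvalid_of (fun j hj => (wordPrefix_eq_iff.mp he j hj).symm) hv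
  · intro h
    exact ⟨σ, rfl, h⟩

end OmegaPowerAux

/-- Every ω-power of a set of finite words is the existential preimage of a recurrence
property under a prefix-continuous, prefix-closed, prefix-compact function. -/
theorem omegaPower_is_existPreimage_of_recurrence {Sig : Type*} [Fintype Sig]
    (A : Set (List Sig)) :
    ∃ (C : Type) (_ : Fintype C) (f : (ℕ → Sig) → Set (ℕ → C)) (L : Set (ℕ → C)),
      PrefixContinuous f ∧ PrefixClosed f ∧ PrefixCompact f ∧
      IsRecurrenceProperty L ∧ omegaPower A = existPreimage f L := by
  classical
  set g := Fin (Fintype.card Sig) with hg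
  let e : Sig ≃ g := Fintype.equivFin Sig
  let d : g → Sig := e.symm
  refine ⟨g × Bool, inferInstance, fun π => {σ | ∀ n, (σ n).1 = e (π n)},
    {σ | {n | wordPrefix σ n ∈ OPphi d A}.Infinite}, ?_, ?_, ?_, ⟨OPphi d A, rfl⟩, ?_⟩
  · -- PrefixContinuous
    intro n π
    refine ⟨n, fun π' hp => ?_⟩
    replace hp := wordPrefix_eq_iff.mp hp
    have key : ∀ ρ ρ' : ℕ → Sig, (∀ j < n, ρ j = ρ' j) →
        prefN {σ : ℕ → g × Bool | ∀ k, (σ k).1 = e (ρ k)} n ⊆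
        prefN {σ : ℕ → g × Bool | ∀ k, (σ k).1 = e (ρ' k)} n := by
      rintro ρ ρ' hr w ⟨σ, hσ, rfl⟩
      refine ⟨fun j => if j < n then σ j else (e (ρ' j), false), fun k => ?_, ?_⟩
      · by_cases hk : k < n
        · simp only [hk, if_pos, hσ k, hr k hk]
        · simp [hk]
      · refine (wordPrefix_eq_iff.mpr fun j hj => ?_)
        simp [hj]
    exact Set.Subset.antisymm (key π π' fun j hj => (hp j hj).symm) (key π' π hp)
  · -- PrefixClosed
    intro π σ hsub n
    have h1 : wordPrefix σ (n + 1) ∈ prefAll {σ : ℕ → g × Bool | ∀ k, (σ k).1 = e (π k)} :=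
      hsub ⟨n + 1, rfl⟩
    rw [prefAll, Set.mem_iUnion] at h1
    obtain ⟨k, τ, hτ, hw⟩ := h1
    have hk : k = n + 1 := by
      have := congrArg List.length hw
      simpa [wordPrefix_length] using this
    subst hk
    have := wordPrefix_eq_iff.mp hw n (by omega)
    rw [← this]
    exact hτ n
  · -- PrefixCompact
    intro n π
    refine Set.Finite.subset (List.finite_length_eq (g × Bool) n) ?_
    rintro w ⟨σ, _, rfl⟩
    simp [wordPrefix_length]
  · -- equality
    ext π
    simp only [existPreimage, Set.mem_setOf_eq, omegaPower]
    constructor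
    · rintro ⟨m, hm0, hmono, hA⟩
      let σ : ℕ → g × Bool := fun j => (e (π j), if ∃ k, m k = j + 1 then true else false)
      have hcut : ∀ j, OPcut σ j ↔ ∃ k, m k = j := by
        intro j
        cases j with
        | zero => exact ⟨fun _ => ⟨0, hm0⟩, fun _ => Or.inl rfl⟩
        | succ j =>
          by_cases h : ∃ k, m k = j + 1 <;> simp [OPcut, σ, h]
      have hval : ∀ k, 1 ≤ k → OPvalid d A σ (m k) := by
        intro k hk
        refine ⟨by have := hmono (show 0 < k from hk); omega, (hcut (m k)).mpr ⟨k, rfl⟩,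
          fun i j hij hjn hci hcj hno => ?_⟩
        obtain ⟨a, rfl⟩ := (hcut i).mp hci
        obtain ⟨b, rfl⟩ := (hcut j).mp hcj
        have hab : a < b := hmono.lt_iff_lt.mp hij
        have hb : b = a + 1 := by
          by_contra hne
          have h1 : a + 1 < b := by omega
          exact hno (m (a + 1)) (hmono (by omega)) (hmono h1) ((hcut _).mpr ⟨a + 1, rfl⟩)
        subst hb
        have hblk : OPblock d σ (m a) (m (a + 1)) =
            (List.range (m (a + 1) - m a)).map fun t => π (m a + t) := by
          unfold OPblock
          refine List.map_congr_left fun t _ => ?_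
          simp [σ, d]
        rw [hblk]
        exact hA a
      refine ⟨σ, fun n => rfl, ?_⟩
      have hmono' : StrictMono fun k => m (k + 1) := fun a b h => hmono (by omega)
      refine (Set.infinite_range_of_injective hmono'.injective).mono ?_
      rintro _ ⟨k, rfl⟩
      exact mem_OPphi.mpr (hval (k + 1) (by omega))
    · rintro ⟨σ, hf, hL⟩
      simp only [Set.mem_setOf_eq] at hf hL
      have hvalid : ∀ n ∈ {n | wordPrefix σ n ∈ OPphi d A}, OPvalid d A σ n :=
        fun n hn => mem_OPphi.mp hn
      have hpinf : {j | OPcut σ j}.Infinite :=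
        hL.mono fun n hn => (hvalid n hn).2.1
      set m := Nat.nth (OPcut σ) with hm
      have hmono : StrictMono m := Nat.nth_strictMono hpinf
      refine ⟨m, ?_, hmono, ?_⟩
      · rw [hm, Nat.nth_zero]
        exact Nat.sInf_eq_zero.mpr (Or.inl (Or.inl rfl))
      · intro k
        have hno : ∀ l, m k < l → l < m (k + 1) → ¬ OPcut σ l := by
          intro l h1 h2 hl
          have h3 : Nat.nth (OPcut σ) (Nat.count (OPcut σ) l) = l := Nat.nth_count hl
          rw [← hm] at h3
          have h4 : k < Nat.count (OPcut σ) l := by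
            by_contra hc
            push_neg at hc
            have := hmono.monotone hc
            omega
          have h5 := hmono.monotone (show k + 1 ≤ Nat.count (OPcut σ) l from h4)
          omega
        obtain ⟨n, hn, hnk⟩ : ∃ n ∈ {n | wordPrefix σ n ∈ OPphi d A}, m (k + 1) ≤ n := by
          obtain ⟨n, hn, h⟩ := hL.exists_gt (m (k + 1))
          exact ⟨n, hn, le_of_lt h⟩
        have hblk := (hvalid n hn).2.2 (m k) (m (k + 1)) (hmono (lt_add_one k)) hnk
          (Nat.nth_mem_of_infinite hpinf k) (Nat.nth_mem_of_infinite hpinf (k + 1)) hno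
        have heq : OPblock d σ (m k) (m (k + 1)) =
            (List.range (m (k + 1) - m k)).map fun j => π (m k + j) := by
          unfold OPblock
          refine List.map_congr_left fun t _ => ?_
          simp [hf, d]
        rwa [heq] at hblk
end

section
/- There exist finite types A and C, a function f : A^ω → 𝒫(C^ω) that is prefix-continuous, prefix-closed, and prefix-compact, and a recurrence property L ⊆ C^ω, such that the existential preimage f_E^{-1}(L) is not a Borel subset of A^ω, i.e., it is not measurable with respect to the Borel σ-algebra generated by the product topology on A^ω = ℕ → A (A discrete). -/
/-!
A word `σ : ℕ → Bool` with infinitely many `true`s is the same thing as the strictly increasing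
sequence `p` of the positions of its `true`s, and each prefix of `σ` reveals a prefix of `p`.
Hence, when every `f x` is a safety property, the existential preimage under `f` of "infinitely
many `true`s" is a projection along strictly increasing witnesses `p`, and `f` can be chosen so
that this preimage is the diagonal `{x | x ∈ codedSet x}` of a universal analytic set: every
analytic subset of `ℕ → Bool` is `codedSet x` for the `x` that marks the codes of all pairs of
prefixes `(z↾n, p↾n)` occurring together in it (a limit argument recovers membership). By Cantor's
diagonal argument the complement of the diagonal is not analytic, so the diagonal is not Borel.
-/

open Set Filter Topology MeasureTheory

section WordPrefix

variable {A : Type*}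

@[simp]
lemma wordPrefix_length_s18 (σ : ℕ → A) (n : ℕ) : (wordPrefix σ n).length = n := by
  simp [wordPrefix]

lemma wordPrefix_succ (σ : ℕ → A) (n : ℕ) : wordPrefix σ (n + 1) = wordPrefix σ n ++ [σ n] := by
  simp [wordPrefix, List.range_succ]

lemma wordPrefix_eq_wordPrefix_iff {σ τ : ℕ → A} {n : ℕ} :
    wordPrefix σ n = wordPrefix τ n ↔ ∀ k < n, σ k = τ k := by
  simp [wordPrefix, List.map_inj_left]

lemma wordPrefix_eq_wordPrefix_of_le {σ τ : ℕ → A} {m n : ℕ} (h : wordPrefix σ m = wordPrefix τ m)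
    (hnm : n ≤ m) : wordPrefix σ n = wordPrefix τ n :=
  wordPrefix_eq_wordPrefix_iff.2 fun k hk => wordPrefix_eq_wordPrefix_iff.1 h k (by omega)

lemma take_wordPrefix (σ : ℕ → A) {k n : ℕ} (hkn : k ≤ n) :
    (wordPrefix σ n).take k = wordPrefix σ k := by
  simp [wordPrefix, ← List.map_take, List.take_range, hkn]

lemma wordPrefix_getD (w : List A) (b : A) : wordPrefix (fun i => w.getD i b) w.length = w := by
  apply List.ext_getElem (by simp)
  intro i _ hi
  simp [wordPrefix, List.getElem?_eq_getElem hi]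

lemma tendsto_of_wordPrefix_eq [TopologicalSpace A] {u : ℕ → ℕ → A} {σ : ℕ → A}
    (h : ∀ n, wordPrefix (u n) n = wordPrefix σ n) : Tendsto u atTop (𝓝 σ) :=
  tendsto_pi_nhds.2 fun i => tendsto_atTop_of_eventually_const (i₀ := i + 1) fun n hn =>
    wordPrefix_eq_wordPrefix_iff.1 (h n) i (by omega)

lemma findIdxs_wordPrefix (σ : ℕ → A) (p : A → Bool) (k : ℕ) :
    (wordPrefix σ k).findIdxs p =
      wordPrefix (Nat.nth fun i => p (σ i)) (Nat.count (fun i => p (σ i)) k) := by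
  induction k with
  | zero => rfl
  | succ k ih =>
    rw [wordPrefix_succ, List.findIdxs_append, ih, Nat.count_succ]
    by_cases hk : p (σ k)
    · simp [hk, wordPrefix_succ, Nat.nth_count (p := fun i => p (σ i) = true) hk]
    · simp [hk]

end WordPrefix

section Safety

variable {A B : Type*}

def safetyFamily (Φ : (ℕ → A) → Set (List B)) (π : ℕ → A) : Set (ℕ → B) :=
  {σ | ∀ k, wordPrefix σ k ∈ Φ π}

lemma prefixClosed_safetyFamily (Φ : (ℕ → A) → Set (List B)) : PrefixClosed (safetyFamily Φ) := by
  intro π σ hσ k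
  obtain ⟨n, τ, hτ, hτσ⟩ := mem_iUnion.1 (hσ ⟨k, rfl⟩)
  obtain rfl : n = k := by simpa using congrArg List.length hτσ
  exact hτσ ▸ hτ n

/-- Padding with `b` extends every finite word all of whose prefixes lie in `Φ π`. -/
lemma prefN_safetyFamily {Φ : (ℕ → A) → Set (List B)} {π : ℕ → A} (b : B)
    (hb : ∀ w ∈ Φ π, w ++ [b] ∈ Φ π) (n : ℕ) :
    prefN (safetyFamily Φ π) n = {w | w.length = n ∧ ∀ k ≤ n, w.take k ∈ Φ π} := by
  ext w
  constructor
  · rintro ⟨σ, hσ, rfl⟩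
    exact ⟨wordPrefix_length_s18 σ n, fun k hk => take_wordPrefix σ hk ▸ hσ k⟩
  · rintro ⟨rfl, hw⟩
    refine ⟨fun i => w.getD i b, fun k => ?_, wordPrefix_getD w b⟩
    induction k with
    | zero => exact hw 0 (Nat.zero_le _)
    | succ k ih =>
      by_cases hk : k + 1 ≤ w.length
      · rw [← take_wordPrefix _ hk, wordPrefix_getD]
        exact hw (k + 1) hk
      · rw [wordPrefix_succ, List.getD_eq_default _ _ (by omega)]
        exact hb _ ih

lemma prefixContinuous_safetyFamily [Finite B] {Φ : (ℕ → A) → Set (List B)} (b : B)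
    (hb : ∀ π, ∀ w ∈ Φ π, w ++ [b] ∈ Φ π)
    (hloc : ∀ π w, ∃ m, ∀ π', wordPrefix π' m = wordPrefix π m → (w ∈ Φ π' ↔ w ∈ Φ π)) :
    PrefixContinuous (safetyFamily Φ) := by
  intro n π
  choose m hm using hloc π
  obtain ⟨M, hM⟩ := ((List.finite_length_le B n).image m).bddAbove
  refine ⟨M, fun π' hπ' => ?_⟩
  have hagree : ∀ w : List B, w.length ≤ n → (w ∈ Φ π' ↔ w ∈ Φ π) := fun w hw =>
    hm w π' (wordPrefix_eq_wordPrefix_of_le hπ' (hM ⟨w, hw, rfl⟩))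
  rw [prefN_safetyFamily b (hb π), prefN_safetyFamily b (hb π')]
  ext w
  refine and_congr_right fun hw => forall₂_congr fun k hk => (hagree _ ?_).symm
  simp [hw, hk]

end Safety

lemma prefixCompact_of_finite {A B : Type*} [Finite B] (f : (ℕ → A) → Set (ℕ → B)) :
    PrefixCompact f := fun n _ =>
  (List.finite_length_eq B n).subset (by rintro _ ⟨σ, -, rfl⟩; exact wordPrefix_length_s18 σ n)

lemma isRecurrenceProperty_setOf_infinite {B : Type*} (b : B) :
    IsRecurrenceProperty {σ : ℕ → B | {m | σ m = b}.Infinite} := by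
  refine ⟨{w | w.getLast? = some b}, ?_⟩
  ext σ
  have hshift : {n | wordPrefix σ n ∈ {w : List B | w.getLast? = some b}} =
      (· + 1) '' {m | σ m = b} := by
    ext (_ | n)
    · simp [wordPrefix]
    · simp [wordPrefix_succ]
  rw [mem_ofPred_eq, mem_ofPred_eq, hshift, infinite_image_iff (add_left_injective 1).injOn]

section Universal

open Encodable

lemma Continuous.exists_forall_mem_image_iff {A B : Type*} [Encodable A] [Encodable B]
    [TopologicalSpace A] [T2Space A] [TopologicalSpace B] {G : (ℕ → B) → ℕ → A} (hG : Continuous G)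
    (W : Set (ℕ → B)) :
    ∃ x : ℕ → Bool, ∀ z, z ∈ G '' W ↔
      ∃ p ∈ W, ∀ n, x (encode (wordPrefix z n, wordPrefix p n)) = false := by
  classical
  let D : Set (List A × List B) :=
    {q | ∃ p ∈ W, wordPrefix p q.2.length = q.2 ∧ wordPrefix (G p) q.1.length = q.1}
  have hD (u : List A) (v : List B) :
      decide (encode (u, v) ∉ encode '' D) = false ↔ (u, v) ∈ D := by simp
  refine ⟨fun c => decide (c ∉ encode '' D), fun z => ⟨?_, ?_⟩⟩
  · rintro ⟨p, hp, rfl⟩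
    exact ⟨p, hp, fun n => (hD _ _).2 ⟨p, hp, by simp, by simp⟩⟩
  · rintro ⟨p, hp, hz⟩
    choose q hqW hqp hqz using fun n => (hD _ _).1 (hz n)
    simp only [wordPrefix_length_s18] at hqp hqz
    have hGq : Tendsto (G ∘ q) atTop (𝓝 (G p)) :=
      (hG.tendsto p).comp (tendsto_of_wordPrefix_eq hqp)
    exact ⟨p, hp, tendsto_nhds_unique hGq (tendsto_of_wordPrefix_eq hqz)⟩

lemma exists_strictMono_forall_sub_eq (y : ℕ → ℕ) :
    ∃ p : ℕ → ℕ, StrictMono p ∧ ∀ n, p (n + 1) - (p n + 1) = y n := by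
  refine ⟨fun n => ∑ i ∈ Finset.range n, (y i + 1), strictMono_nat_of_lt_succ fun n => ?_,
    fun n => ?_⟩
  all_goals simp only [Finset.sum_range_succ]; omega

def codedSet (x : ℕ → Bool) : Set (ℕ → Bool) :=
  {z | ∃ p : ℕ → ℕ, StrictMono p ∧ ∀ n, x (encode (wordPrefix z n, wordPrefix p n)) = false}

def diagonalSet : Set (ℕ → Bool) := {x | x ∈ codedSet x}

lemma MeasureTheory.AnalyticSet.exists_codedSet_eq {s : Set (ℕ → Bool)} (hs : AnalyticSet s) :
    ∃ x, codedSet x = s := by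
  rw [AnalyticSet] at hs
  rcases hs with rfl | ⟨g, hg, rfl⟩
  · refine ⟨fun _ => true, eq_empty_iff_forall_notMem.2 fun z ⟨p, _, hp⟩ => ?_⟩
    simpa using hp 0
  · let G (p : ℕ → ℕ) : ℕ → Bool := g fun n => p (n + 1) - (p n + 1)
    have hG : Continuous G := hg.comp (by fun_prop)
    have himage : G '' {p | StrictMono p} = range g := by
      refine Subset.antisymm (image_subset_iff.2 fun p _ => mem_range_self _) ?_
      rintro _ ⟨y, rfl⟩
      obtain ⟨p, hp, hpy⟩ := exists_strictMono_forall_sub_eq y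
      exact ⟨p, hp, congrArg g (funext hpy)⟩
    obtain ⟨x, hx⟩ := hG.exists_forall_mem_image_iff {p | StrictMono p}
    exact ⟨x, Set.ext fun z => (himage ▸ hx z).symm⟩

lemma not_analyticSet_compl_diagonalSet : ¬ AnalyticSet diagonalSetᶜ := fun h => by
  obtain ⟨x, hx⟩ := h.exists_codedSet_eq
  exact iff_not_self (Set.ext_iff.1 hx x)

lemma not_measurableSet_diagonalSet : ¬ MeasurableSet diagonalSet := fun h => by
  -- instance search does not find this one
  have : PolishSpace (ℕ → Bool) := {}
  exact not_analyticSet_compl_diagonalSet h.compl.analyticSet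

end Universal

lemma Nat.nth_mem_range {p : ℕ → ℕ} (hp : StrictMono p) : Nat.nth (· ∈ range p) = p := by
  funext n
  have := Nat.nth_comp_of_strictMono (n := n) hp (fun _ h => h)
    fun hf => absurd hf (infinite_range_of_injective hp.injective)
  simp only [mem_range_self, Nat.nth_true] at this
  exact this.symm

section Reduction

open Encodable

/-- `w.findIdxs id`, the positions of `true` in `w`, is the prefix of the witness `p` of
`codedSet` that `w` reveals. -/
def diagonalConstraint (x : ℕ → Bool) : Set (List Bool) :=
  {w | x (encode (wordPrefix x (w.findIdxs id).length, w.findIdxs id)) = false}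

lemma append_false_mem_diagonalConstraint {x : ℕ → Bool} {w : List Bool}
    (hw : w ∈ diagonalConstraint x) : w ++ [false] ∈ diagonalConstraint x := by
  simpa [diagonalConstraint] using hw

lemma diagonalConstraint_local (x : ℕ → Bool) (w : List Bool) : ∃ m, ∀ x',
    wordPrefix x' m = wordPrefix x m → (w ∈ diagonalConstraint x' ↔ w ∈ diagonalConstraint x) := by
  set t := w.findIdxs id
  refine ⟨max t.length (encode (wordPrefix x t.length, t) + 1), fun x' hx' => ?_⟩
  have hpre : wordPrefix x' t.length = wordPrefix x t.length :=
    wordPrefix_eq_wordPrefix_of_le hx' (le_max_left _ _)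
  have hcode := wordPrefix_eq_wordPrefix_iff.1 hx' (encode (wordPrefix x t.length, t)) (by omega)
  simp only [diagonalConstraint, mem_ofPred_eq, hpre, hcode, t]

lemma existPreimage_safetyFamily_diagonalConstraint :
    existPreimage (safetyFamily diagonalConstraint) {σ | {m | σ m = true}.Infinite} =
      diagonalSet := by
  classical
  ext x
  constructor
  · rintro ⟨σ, hσx, hσ⟩
    refine ⟨Nat.nth (σ · = true), Nat.nth_strictMono hσ, fun n => ?_⟩
    simpa only [diagonalConstraint, mem_ofPred_eq, findIdxs_wordPrefix, wordPrefix_length_s18, id,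
      Nat.count_nth_of_infinite hσ] using hσx (Nat.nth (σ · = true) n)
  · rintro ⟨p, hp, hx⟩
    let σ : ℕ → Bool := fun m => decide (m ∈ range p)
    have hσ : {m | σ m = true} = range p := by ext; simp [σ]
    have hnth : Nat.nth (σ · = true) = p := by simpa [σ] using Nat.nth_mem_range hp
    refine ⟨σ, fun k => ?_, ?_⟩
    · simp only [diagonalConstraint, mem_ofPred_eq, findIdxs_wordPrefix, wordPrefix_length_s18, id,
        hnth]
      exact hx _
    · rw [mem_ofPred_eq, hσ]
      exact infinite_range_of_injective hp.injective

end Reduction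

/-- There are finite alphabets `A`, `C`, a prefix-continuous, prefix-closed,
prefix-compact function `f : A^ω → 𝒫(C^ω)` and a recurrence property `L ⊆ C^ω` whose
existential preimage under `f` is not Borel, i.e., not measurable with respect to the
Borel σ-algebra generated by the product topology on `ℕ → A` (`A` discrete). -/
theorem existPreimage_of_recurrence_not_borel :
    ∃ (A C : Type) (_ : Fintype A) (_ : Fintype C)
      (f : (ℕ → A) → Set (ℕ → C)) (L : Set (ℕ → C)),
      PrefixContinuous f ∧ PrefixClosed f ∧ PrefixCompact f ∧ IsRecurrenceProperty L ∧
      ¬ @MeasurableSet (ℕ → A)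
          (@borel (ℕ → A) (@Pi.topologicalSpace ℕ (fun _ => A) (fun _ => ⊥)))
          (existPreimage f L) := by
  refine ⟨Bool, Bool, inferInstance, inferInstance, safetyFamily diagonalConstraint,
    {σ | {m | σ m = true}.Infinite},
    prefixContinuous_safetyFamily false (fun _ _ => append_false_mem_diagonalConstraint)
      diagonalConstraint_local,
    prefixClosed_safetyFamily _, prefixCompact_of_finite _,
    isRecurrenceProperty_setOf_infinite true, ?_⟩
  rw [existPreimage_safetyFamily_diagonalConstraint, ← BorelSpace.measurable_eq]
  exact not_measurableSet_diagonalSet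
end
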